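/- There exists a multi-valued function F from the unit interval [0,1] to ℝ such that F(x) is a nonempty closed subset of ℝ for every x ∈ [0,1], the graph of F is a Gδ subset of [0,1] × ℝ, and the set of points of continuity of F is not a Π⁰₃ subset of [0,1], i.e., it is not a countable intersection of Fσ sets. -/

import Mathlib

/-!
Split a point `x` of the Cantor space `ℕ × ℕ → Bool` into its columns and let the multi-valued
function take at `x` one value `4n + decay (column x n)` for each column `n`; transported along a
closed embedding of the Cantor space into `[0, 1]`, it is extended by `ℝ` off the image.
`decay` is upper semicontinuous, which makes the graph `Gδ`. It is positive on eventually-false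
columns and vanishes on columns with infinitely many `true`s, which occur arbitrarily close to any
column, so the function is discontinuous exactly on the image of `finiteColumns`, the points all
of whose columns are eventually false.

`finiteColumns` is not a countable union of `Gδ` sets. Code each eventually-false column by a
natural number, giving a continuous surjection `ℕ → ℕ` onto `finiteColumns`. A `Gδ` set
`H ⊆ finiteColumns` is meagre once finitely many columns are pinned, since a free column is then
eventually false on it; Baire in the Cantor space yields a finite pattern avoiding `H`, so the
preimage of `H` is nowhere dense in `ℕ → ℕ`, and Baire in `ℕ → ℕ` concludes.
-/

/-- A multi-valued function `F : X → Set Y` is continuous at `x`. -/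
def MVContinuousAt {X Y : Type*} [MetricSpace X] [MetricSpace Y]
    (F : X → Set Y) (x : X) : Prop :=
  ∃ y ∈ F x, ∀ ε > (0 : ℝ), ∃ δ > (0 : ℝ),
    ∀ x', dist x' x < δ → ∃ y' ∈ F x', dist y y' < ε

/-- A set is `Fσ` if it is a countable union of closed sets. -/
def IsFsigma {X : Type*} [TopologicalSpace X] (S : Set X) : Prop :=
  ∃ g : ℕ → Set X, (∀ n, IsClosed (g n)) ∧ S = ⋃ n, g n

/-- A set is `Π⁰₃` if it is a countable intersection of `Fσ` sets. -/
def IsPi03 {X : Type*} [TopologicalSpace X] (S : Set X) : Prop :=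
  ∃ g : ℕ → Set X, (∀ n, IsFsigma (g n)) ∧ S = ⋂ n, g n

open Set Filter Topology Function

theorem IsFsigma.isGδ_compl {X : Type*} [TopologicalSpace X] {s : Set X} (hs : IsFsigma s) :
    IsGδ sᶜ := by
  obtain ⟨g, hg, rfl⟩ := hs
  rw [compl_iUnion]
  exact .iInter_of_isOpen fun n => (hg n).isOpen_compl

theorem IsPi03.preimage {X Y : Type*} [TopologicalSpace X] [TopologicalSpace Y] {f : X → Y}
    (hf : Continuous f) {s : Set Y} (hs : IsPi03 s) : IsPi03 (f ⁻¹' s) := by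
  obtain ⟨g, hg, rfl⟩ := hs
  refine ⟨fun n => f ⁻¹' g n, fun n => ?_, preimage_iInter⟩
  obtain ⟨c, hc, hgc⟩ := hg n
  exact ⟨fun k => f ⁻¹' c k, fun k => (hc k).preimage hf, by simp only [hgc, preimage_iUnion]⟩

theorem IsGδ.iUnion_of_subset_of_pairwise_disjoint {X ι : Type*} [TopologicalSpace X]
    {A O : ι → Set X} (hA : ∀ i, IsGδ (A i)) (hO : ∀ i, IsOpen (O i)) (hAO : ∀ i, A i ⊆ O i)
    (hdisj : Pairwise (Disjoint on O)) : IsGδ (⋃ i, A i) := by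
  choose U hU hAU using fun i => (hA i).eq_iInter_nat
  suffices ⋃ i, A i = ⋂ j, ⋃ i, U i j ∩ O i from
    this ▸ .iInter_of_isOpen fun j => isOpen_iUnion fun i => (hU i j).inter (hO i)
  refine Subset.antisymm (iUnion_subset fun i x hx => mem_iInter.2 fun j =>
    mem_iUnion.2 ⟨i, mem_iInter.1 (hAU i ▸ hx : x ∈ ⋂ j, U i j) j, hAO i hx⟩) fun x hx => ?_
  choose i hi using fun j => mem_iUnion.1 (mem_iInter.1 hx j)
  have hconst : ∀ j, i j = i 0 := fun j =>
    hdisj.eq (not_disjoint_iff.2 ⟨x, (hi j).2, (hi 0).2⟩)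
  refine mem_iUnion.2 ⟨i 0, hAU (i 0) ▸ mem_iInter.2 fun j => ?_⟩
  simpa [hconst j] using (hi j).1

theorem Topology.IsClosedEmbedding.isGδ_image {X Y : Type*} [TopologicalSpace X]
    [TopologicalSpace Y] [PerfectlyNormalSpace Y] {f : X → Y} (hf : IsClosedEmbedding f)
    {s : Set X} (hs : IsGδ s) : IsGδ (f '' s) := by
  obtain ⟨U, hU, rfl⟩ := hs.eq_iInter_nat
  choose V hV hVU using fun n => hf.isOpen_iff.1 (hU n)
  simp_rw [← hVU, ← preimage_iInter, image_preimage_eq_inter_range]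
  exact (IsGδ.iInter_of_isOpen hV).inter hf.isClosed_range.isGδ

theorem UpperSemicontinuous.isGδ_graph {X : Type*} [TopologicalSpace X]
    [PerfectlyNormalSpace (X × ℝ)] {f : X → ℝ} (hf : UpperSemicontinuous f) :
    IsGδ {p : X × ℝ | p.2 = f p.1} := by
  have hgap : UpperSemicontinuous fun p : X × ℝ => f p.1 - p.2 :=
    (hf.comp continuous_fst).add continuous_snd.neg.upperSemicontinuous
  have hle : {p : X × ℝ | f p.1 ≤ p.2} =
      ⋂ k : ℕ, (fun p : X × ℝ => f p.1 - p.2) ⁻¹' Iio (1 / (k + 1)) := by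
    ext p
    simp only [mem_ofPred_eq, mem_iInter, mem_preimage, mem_Iio, sub_lt_iff_lt_add']
    refine ⟨fun h k => h.trans_lt (by simp; positivity), fun h => ?_⟩
    refine le_of_forall_pos_lt_add fun ε hε => ?_
    obtain ⟨k, hk⟩ := exists_nat_one_div_lt hε
    linarith [h k]
  have hGδ : IsGδ {p : X × ℝ | f p.1 ≤ p.2} :=
    hle ▸ .iInter_of_isOpen fun k => hgap.isOpen_preimage _
  convert hf.IsClosed_hypograph.isGδ.inter hGδ using 1
  ext p
  exact le_antisymm_iff

/-- The Kuratowski lower limit of `Φ` at `x`. -/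
def lowerLimit {K Y : Type*} [TopologicalSpace K] [PseudoMetricSpace Y] (Φ : K → Set Y) (x : K) :
    Set Y :=
  {y | ∀ ε > 0, ∀ᶠ x' in 𝓝 x, ∃ y' ∈ Φ x', dist y y' < ε}

theorem mvContinuousAt_iff_exists_mem_lowerLimit {X Y : Type*} [MetricSpace X] [MetricSpace Y]
    {F : X → Set Y} {x : X} : MVContinuousAt F x ↔ ∃ y ∈ F x, y ∈ lowerLimit F x := by
  simp only [MVContinuousAt, lowerLimit, mem_ofPred_eq, Metric.eventually_nhds_iff]

theorem forall_extend_univ {K X Y : Type*} {e : K → X} {Φ : K → Set Y} {P : Set Y → Prop}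
    (he : Injective e) (hΦ : ∀ a, P (Φ a)) (huniv : P univ) (x : X) :
    P (extend e Φ (fun _ => univ) x) := by
  by_cases hx : ∃ a, e a = x
  · obtain ⟨a, rfl⟩ := hx
    rw [he.extend_apply]
    exact hΦ a
  · rwa [extend_apply' _ _ _ hx]

section ExtendAlongEmbedding

variable {K X Y : Type*} [MetricSpace X] [MetricSpace Y] {e : K → X} {Φ : K → Set Y}

theorem isGδ_graph_extend_univ [TopologicalSpace K] [PerfectlyNormalSpace (X × Y)]
    (he : IsClosedEmbedding e) (hΦ : IsGδ {p : K × Y | p.2 ∈ Φ p.1}) :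
    IsGδ {p : X × Y | p.2 ∈ extend e Φ (fun _ => univ) p.1} := by
  have hgraph : {p : X × Y | p.2 ∈ extend e Φ (fun _ => univ) p.1} =
      Prod.map e id '' {p : K × Y | p.2 ∈ Φ p.1} ∪ Prod.fst ⁻¹' (range e)ᶜ := by
    ext ⟨x, y⟩
    by_cases hx : ∃ a, e a = x
    · obtain ⟨a, rfl⟩ := hx
      simp [he.injective.extend_apply, he.injective.eq_iff]
    · simp [hx]
  rw [hgraph]
  exact (he.prodMap .id).isGδ_image hΦ |>.union
    (he.isClosed_range.isOpen_compl.preimage continuous_fst).isGδ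

theorem mvContinuousAt_extend_univ_of_notMem_range [Nonempty Y] (hrange : IsClosed (range e))
    {x : X} (hx : x ∉ range e) : MVContinuousAt (extend e Φ fun _ => univ) x := by
  have hoff : ∀ x' ∉ range e, extend e Φ (fun _ => univ) x' = univ := fun x' hx' =>
    extend_apply' _ _ _ hx'
  obtain ⟨y⟩ := ‹Nonempty Y›
  refine mvContinuousAt_iff_exists_mem_lowerLimit.2 ⟨y, by simp [hoff x hx], fun ε hε => ?_⟩
  filter_upwards [hrange.isOpen_compl.mem_nhds hx] with x' hx'
  exact ⟨y, by simp [hoff x' hx'], by simpa using hε⟩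

theorem lowerLimit_extend_univ [TopologicalSpace K] (he : IsEmbedding e) (a : K) :
    lowerLimit (extend e Φ fun _ => univ) (e a) = lowerLimit Φ a := by
  ext y
  refine forall₂_congr fun ε hε => ⟨fun h => ?_, fun h => ?_⟩
  · filter_upwards [he.continuous.tendsto a |>.eventually h] with a' ha'
    rwa [he.injective.extend_apply] at ha'
  · rw [he.nhds_eq_comap, eventually_comap] at h
    filter_upwards [h] with x' hx'
    by_cases hx : ∃ a', e a' = x'
    · obtain ⟨a', rfl⟩ := hx
      rw [he.injective.extend_apply]
      exact hx' a' rfl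
    · exact ⟨y, by simp [extend_apply' _ _ _ hx], by simpa using hε⟩

theorem setOf_mvContinuousAt_extend_univ [TopologicalSpace K] [Nonempty Y]
    (he : IsClosedEmbedding e) :
    {x | MVContinuousAt (extend e Φ fun _ => univ) x} =
      (e '' {a | ∀ y ∈ Φ a, y ∉ lowerLimit Φ a})ᶜ := by
  ext x
  by_cases hx : ∃ a, e a = x
  · obtain ⟨a, rfl⟩ := hx
    simp [mvContinuousAt_iff_exists_mem_lowerLimit, he.injective.extend_apply,
      lowerLimit_extend_univ he.isEmbedding, he.injective.eq_iff]
  · simp only [mem_ofPred_eq, mem_compl_iff, mem_image, not_exists.1 hx, and_false,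
      exists_false, not_false_eq_true, iff_true]
    exact mvContinuousAt_extend_univ_of_notMem_range he.isClosed_range (by simpa using hx)

end ExtendAlongEmbedding

namespace CantorColumns

def EventuallyFalse (c : ℕ → Bool) : Prop := ∃ r, ∀ i ≥ r, c i = false

def column (x : ℕ × ℕ → Bool) (n : ℕ) : ℕ → Bool := fun i => x (n, i)

theorem continuous_column (n : ℕ) : Continuous fun x : ℕ × ℕ → Bool => column x n :=
  continuous_pi fun _ => continuous_apply _

def finiteColumns : Set (ℕ × ℕ → Bool) := {x | ∀ n, EventuallyFalse (column x n)}

def fillColumn (n N : ℕ) (x : ℕ × ℕ → Bool) : ℕ × ℕ → Bool :=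
  fun p => if p.1 = n ∧ N ≤ p.2 then true else x p

theorem tendsto_fillColumn (n : ℕ) (x : ℕ × ℕ → Bool) :
    Tendsto (fun N => fillColumn n N x) atTop (𝓝 x) :=
  tendsto_pi_nhds.2 fun p => tendsto_const_nhds.congr' <|
    (eventually_gt_atTop p.2).mono fun N hN => by simp [fillColumn, hN.not_ge]

theorem not_eventuallyFalse_column_fillColumn (n N : ℕ) (x : ℕ × ℕ → Bool) :
    ¬EventuallyFalse (column (fillColumn n N x) n) := fun ⟨r, hr⟩ => by
  simpa [column, fillColumn] using hr (max r N) (le_max_left _ _)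

open Classical in
noncomputable def decay (c : ℕ → Bool) : ℝ :=
  if h : EventuallyFalse c then (1 / 2) ^ Nat.find h else 0

theorem decay_mem_Icc (c : ℕ → Bool) : decay c ∈ Icc 0 1 := by
  unfold decay
  split
  · exact ⟨by positivity, pow_le_one₀ (by norm_num) (by norm_num)⟩
  · simp

theorem decay_pos {c : ℕ → Bool} (h : EventuallyFalse c) : 0 < decay c := by
  rw [decay, dif_pos h]
  positivity

theorem decay_eq_zero {c : ℕ → Bool} (h : ¬EventuallyFalse c) : decay c = 0 := dif_neg h

theorem decay_le_of_eq_true {c : ℕ → Bool} {j : ℕ} (hj : c j = true) :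
    decay c ≤ (1 / 2) ^ (j + 1) := by
  classical
  unfold decay
  split_ifs with h
  · refine pow_le_pow_of_le_one (by norm_num) (by norm_num) ((Nat.le_find_iff h _).2 ?_)
    intro m hm hfalse
    simp [hfalse j (by omega)] at hj
  · positivity

theorem upperSemicontinuous_decay : UpperSemicontinuous decay := by
  classical
  intro c a hca
  rcases lt_or_ge 1 a with h1 | h1
  · exact Eventually.of_forall fun c' => (decay_mem_Icc c').2.trans_lt h1
  obtain ⟨N, hN, i, hiN, hi⟩ : ∃ N, (1 / 2 : ℝ) ^ (N + 1) < a ∧ ∃ i ≥ N, c i = true := by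
    by_cases h : EventuallyFalse c
    · have hr : (1 / 2 : ℝ) ^ Nat.find h < a := by rwa [decay, dif_pos h] at hca
      have hr0 : Nat.find h ≠ 0 := fun h0 => by rw [h0] at hr; linarith
      refine ⟨Nat.find h - 1, by rwa [Nat.sub_add_cancel (Nat.one_le_iff_ne_zero.2 hr0)], ?_⟩
      have hmin := Nat.find_min h (Nat.sub_lt (Nat.pos_of_ne_zero hr0) one_pos)
      push Not at hmin
      obtain ⟨i, hi, hci⟩ := hmin
      exact ⟨i, hi, by simpa using hci⟩
    · obtain ⟨N, hN⟩ := exists_pow_lt_of_lt_one ((decay_mem_Icc c).1.trans_lt hca)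
        (by norm_num : (1 / 2 : ℝ) < 1)
      refine ⟨N, (pow_le_pow_of_le_one (by norm_num) (by norm_num) N.le_succ).trans_lt hN, ?_⟩
      simp only [EventuallyFalse, not_exists, not_forall, Bool.not_eq_false] at h
      obtain ⟨i, hi, hci⟩ := h N
      exact ⟨i, hi, hci⟩
  have hnhds : (fun c' : ℕ → Bool => c' i) ⁻¹' {true} ∈ 𝓝 c :=
    (isOpen_discrete {true}).preimage (continuous_apply i) |>.mem_nhds hi
  filter_upwards [hnhds] with c' hc'
  calc decay c' ≤ (1 / 2) ^ (i + 1) := decay_le_of_eq_true hc'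
    _ ≤ (1 / 2) ^ (N + 1) := pow_le_pow_of_le_one (by norm_num) (by norm_num) (by omega)
    _ < a := hN

def branches (x : ℕ × ℕ → Bool) : Set ℝ := range fun n : ℕ => 4 * n + decay (column x n)

theorem three_le_dist_of_ne {n m : ℕ} (hnm : n ≠ m) {a b : ℝ} (ha : a ∈ Icc 0 1)
    (hb : b ∈ Icc 0 1) : 3 ≤ dist (4 * n + a) (4 * m + b) := by
  rw [Real.dist_eq]
  obtain ⟨ha0, ha1⟩ := ha
  obtain ⟨hb0, hb1⟩ := hb
  rcases Nat.lt_or_gt_of_ne hnm with h | h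
  · have : (n : ℝ) + 1 ≤ m := by exact_mod_cast h
    rw [abs_of_neg (by linarith)]
    linarith
  · have : (m : ℝ) + 1 ≤ n := by exact_mod_cast h
    rw [abs_of_pos (by linarith)]
    linarith

theorem isClosed_branches (x : ℕ × ℕ → Bool) : IsClosed (branches x) := by
  refine Metric.isClosed_of_pairwise_le_dist three_pos ?_
  rintro _ ⟨n, rfl⟩ _ ⟨m, rfl⟩ hne
  exact three_le_dist_of_ne (fun h => hne (by rw [h])) (decay_mem_Icc _) (decay_mem_Icc _)

theorem isGδ_graph_branches : IsGδ {p : (ℕ × ℕ → Bool) × ℝ | p.2 ∈ branches p.1} := by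
  have hgraph : {p : (ℕ × ℕ → Bool) × ℝ | p.2 ∈ branches p.1} = ⋃ n : ℕ,
      (fun p : (ℕ × ℕ → Bool) × ℝ => (column p.1 n, p.2 - 4 * n)) ⁻¹'
        {q : (ℕ → Bool) × ℝ | q.2 = decay q.1} := by
    ext p
    simp only [mem_ofPred_eq, branches, mem_range, mem_iUnion, mem_preimage]
    exact exists_congr fun n => by constructor <;> intro h <;> linarith
  rw [hgraph]
  refine .iUnion_of_subset_of_pairwise_disjoint
    (O := fun n : ℕ => Prod.snd ⁻¹' Metric.ball (4 * n : ℝ) (3 / 2))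
    (fun n => upperSemicontinuous_decay.isGδ_graph.preimage
      (((continuous_column n).comp continuous_fst).prodMk (continuous_snd.sub continuous_const)))
    (fun n => Metric.isOpen_ball.preimage continuous_snd) (fun n p hp => ?_) fun n m hnm => ?_
  · obtain ⟨h0, h1⟩ := decay_mem_Icc (column p.1 n)
    simp only [mem_preimage, mem_ofPred_eq, Metric.mem_ball, Real.dist_eq] at hp ⊢
    rw [abs_lt]
    constructor <;> linarith
  · refine (Metric.ball_disjoint_ball ?_).preimage Prod.snd
    simpa [add_zero] using three_le_dist_of_ne hnm (a := 0) (b := 0) (by simp) (by simp)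

theorem mem_lowerLimit_branches {x : ℕ × ℕ → Bool} {n : ℕ}
    (hn : ¬EventuallyFalse (column x n)) : (4 * n : ℝ) ∈ lowerLimit branches x := by
  intro ε hε
  have hsmall := upperSemicontinuous_decay (column x n) ε (by simpa [decay_eq_zero hn] using hε)
  filter_upwards [(continuous_column n).tendsto x |>.eventually hsmall] with x' hx'
  refine ⟨_, ⟨n, rfl⟩, ?_⟩
  simpa [Real.dist_eq, abs_of_nonneg (decay_mem_Icc _).1] using hx'

theorem notMem_lowerLimit_branches {x : ℕ × ℕ → Bool} (hx : x ∈ finiteColumns) {y : ℝ}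
    (hy : y ∈ branches x) : y ∉ lowerLimit branches x := by
  obtain ⟨n, rfl⟩ := hy
  intro hlim
  obtain ⟨N, _, ⟨m, rfl⟩, hdist⟩ :=
    ((tendsto_fillColumn n x).eventually (hlim _ (decay_pos (hx n)))).exists
  rcases eq_or_ne m n with rfl | hmn
  · simp [decay_eq_zero (not_eventuallyFalse_column_fillColumn _ _ _),
      abs_of_nonneg (decay_mem_Icc _).1] at hdist
  · linarith [three_le_dist_of_ne hmn.symm (decay_mem_Icc (column x n))
      (decay_mem_Icc (column (fillColumn n N x) m)), (decay_mem_Icc (column x n)).2]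

theorem setOf_forall_notMem_lowerLimit_branches :
    {x | ∀ y ∈ branches x, y ∉ lowerLimit branches x} = finiteColumns := by
  ext x
  refine ⟨fun h n => by_contra fun hn => h _ ⟨n, by simp [decay_eq_zero hn]⟩
    (mem_lowerLimit_branches hn), fun hx _ => notMem_lowerLimit_branches hx⟩

theorem isMeagre_setOf_eventuallyFalse_column (n : ℕ) :
    IsMeagre {x : ℕ × ℕ → Bool | EventuallyFalse (column x n)} := by
  have hcompl : {x : ℕ × ℕ → Bool | EventuallyFalse (column x n)}ᶜ =
      ⋂ r : ℕ, ⋃ i ≥ r, (fun x : ℕ × ℕ → Bool => x (n, i)) ⁻¹' {true} := by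
    ext x
    simp [EventuallyFalse, column]
  refine residual_of_dense_Gδ ?_ fun x => mem_closure_of_tendsto (tendsto_fillColumn n x)
    (Eventually.of_forall fun N => not_eventuallyFalse_column_fillColumn n N x)
  rw [hcompl]
  exact .iInter_of_isOpen fun r => isOpen_biUnion fun i _ =>
    (isOpen_discrete {true}).preimage (continuous_apply _)

theorem exists_pattern_notMem {H : Set (ℕ × ℕ → Bool)} (hH : IsGδ H) (hHE : H ⊆ finiteColumns)
    (I : Finset ℕ) (z : ℕ × ℕ → Bool) :
    ∃ (t : ℕ × ℕ → Bool) (J : Finset (ℕ × ℕ)), ∀ x : ℕ × ℕ → Bool,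
      (∀ p : ℕ × ℕ, p.1 ∈ I → x p = z p) → (∀ p ∈ J, p.1 ∉ I → x p = t p) → x ∉ H := by
  classical
  set pin : (ℕ × ℕ → Bool) → ℕ × ℕ → Bool := fun x p => if p.1 ∈ I then z p else x p
  have hpin : Continuous pin := continuous_pi fun p => by
    by_cases hp : p.1 ∈ I
    · simpa [pin, hp] using continuous_const
    · simpa [pin, hp] using continuous_apply p
  obtain ⟨n, hn⟩ := Infinite.exists_notMem_finset I
  have hmeagre : IsMeagre (pin ⁻¹' H) := (isMeagre_setOf_eventuallyFalse_column n).mono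
    fun x hx => by
      have hcol : column (pin x) n = column x n := funext fun i => by simp [column, pin, hn]
      simpa [hcol] using hHE hx n
  obtain ⟨t, ht⟩ : ∃ t, t ∉ closure (pin ⁻¹' H) := by
    by_contra! h
    exact not_isMeagre_of_isGδ_of_dense (hH.preimage hpin) h hmeagre
  obtain ⟨J, u, hu, hJu⟩ := isOpen_pi_iff.1 isClosed_closure.isOpen_compl t ht
  refine ⟨t, J, fun x hxz hxt hxH => ?_⟩
  -- `pin` ignores the columns in `I`, so `x'`, which copies `t` there, still lies in `pin ⁻¹' H`
  set x' : ℕ × ℕ → Bool := fun p => if p.1 ∈ I then t p else x p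
  have hx' : pin x' = x := funext fun p => by
    by_cases hp : p.1 ∈ I
    · simp [pin, hp, hxz]
    · simp [pin, x', hp]
  refine hJu (fun p hp => ?_) (subset_closure (show pin x' ∈ H from hx' ▸ hxH))
  by_cases hpI : p.1 ∈ I
  · simpa [x', hpI] using (hu p hp).2
  · simpa [x', hpI, hxt p hp hpI] using (hu p hp).2

theorem exists_range_eq_setOf_eventuallyFalse :
    ∃ code : ℕ → ℕ → Bool, range code = {c | EventuallyFalse c} := by
  have hcount : {c : ℕ → Bool | EventuallyFalse c}.Countable :=
    Set.Countable.mono (by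
      rintro c ⟨r, hr⟩
      refine ⟨(Finset.range r).filter (c · = true), funext fun i => ?_⟩
      by_cases hi : i < r
      · simp [hi]
      · simp [hi, hr i (not_lt.1 hi)])
      (countable_range fun S : Finset ℕ => fun i => decide (i ∈ S))
  obtain ⟨code, hcode⟩ := hcount.exists_eq_range ⟨fun _ => false, 0, fun _ _ => rfl⟩
  exact ⟨code, hcode.symm⟩

def decodeColumns (code : ℕ → ℕ → Bool) (a : ℕ → ℕ) : ℕ × ℕ → Bool := fun p => code (a p.1) p.2

theorem isNowhereDense_preimage_decodeColumns {code : ℕ → ℕ → Bool}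
    (hcode : range code = {c | EventuallyFalse c}) {H : Set (ℕ × ℕ → Bool)} (hH : IsGδ H)
    (hHE : H ⊆ finiteColumns) : IsNowhereDense (decodeColumns code ⁻¹' H) := by
  classical
  rw [IsNowhereDense, eq_empty_iff_forall_notMem]
  intro a ha
  obtain ⟨I, u, hu, hIu⟩ := isOpen_pi_iff.1 isOpen_interior a ha
  obtain ⟨t, J, hJ⟩ := exists_pattern_notMem hH hHE I (decodeColumns code a)
  have hpattern : ∀ n, ∃ k, code k = fun i => if (n, i) ∈ J then t (n, i) else false := by
    intro n
    rw [← mem_range, hcode]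
    obtain ⟨r, hr⟩ := (J.image Prod.snd).exists_nat_subset_range
    exact ⟨r, fun i hi => if_neg fun hJi =>
      (Finset.mem_range.1 (hr (Finset.mem_image_of_mem Prod.snd hJi))).not_ge hi⟩
  choose k hk using hpattern
  -- `b` agrees with `a` on the columns in `I` and codes the pattern `t` on `J` elsewhere
  set b : ℕ → ℕ := fun n => if n ∈ I then a n else k n
  set C : Set (ℕ → ℕ) := ((I ∪ J.image Prod.fst : Finset ℕ) : Set ℕ).pi fun n => {b n}
  have hC : IsOpen C := isOpen_set_pi (Finset.finite_toSet _) fun _ _ => isOpen_discrete _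
  have hbC : b ∈ C := fun n _ => rfl
  have hCsub : C ⊆ closure (decodeColumns code ⁻¹' H) := fun a' ha' => interior_subset <|
    hIu fun n hn => by
      have hnI : n ∈ I := hn
      have : a' n = a n := by simpa [b, hnI] using ha' n (by simp [hnI])
      exact this ▸ (hu n hn).2
  obtain ⟨a', ha'C, ha'H⟩ := mem_closure_iff.1 (hCsub hbC) C hC hbC
  refine hJ (decodeColumns code a') (fun p hp => ?_) (fun p hp hpI => ?_) ha'H
  · have : a' p.1 = a p.1 := by simpa [b, hp] using ha'C p.1 (by simp [hp])
    simp [decodeColumns, this]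
  · have : a' p.1 = k p.1 := by
      simpa [b, hpI] using ha'C p.1 (by simp; exact Or.inr ⟨p.2, hp⟩)
    simp [decodeColumns, this, hk, hp]

theorem decodeColumns_mem_finiteColumns {code : ℕ → ℕ → Bool}
    (hcode : range code = {c | EventuallyFalse c}) (a : ℕ → ℕ) :
    decodeColumns code a ∈ finiteColumns :=
  fun n => hcode.subset (mem_range_self (a n))

theorem not_isPi03_compl_finiteColumns : ¬IsPi03 finiteColumnsᶜ := by
  rintro ⟨g, hg, hgE⟩
  have hE : finiteColumns = ⋃ m, (g m)ᶜ := by rw [← compl_iInter, ← hgE, compl_compl]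
  obtain ⟨code, hcode⟩ := exists_range_eq_setOf_eventuallyFalse
  have hcover : ⋃ m, decodeColumns code ⁻¹' (g m)ᶜ = univ := by
    rw [← preimage_iUnion, ← hE]
    exact eq_univ_of_forall (decodeColumns_mem_finiteColumns hcode)
  refine not_isMeagre_of_isOpen isOpen_univ univ_nonempty (hcover ▸ isMeagre_iUnion fun m => ?_)
  exact (isNowhereDense_preimage_decodeColumns hcode (hg m).isGδ_compl
    (hE ▸ subset_iUnion (fun m => (g m)ᶜ) m)).isMeagre

theorem exists_isClosedEmbedding_unitInterval :
    ∃ e : (ℕ × ℕ → Bool) → Icc (0 : ℝ) 1, IsClosedEmbedding e := by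
  let h : (ℕ × ℕ → Bool) ≃ₜ cantorSet :=
    (Homeomorph.piCongrLeft (Y := fun _ => Bool) Nat.pairEquiv.symm).symm.trans
      cantorSetHomeomorphNatToBool.symm
  refine ⟨fun x => ⟨h x, cantorSet_subset_unitInterval (h x).2⟩,
    Continuous.isClosedEmbedding (by fun_prop) fun x y hxy => h.injective (Subtype.ext ?_)⟩
  simpa using congrArg Subtype.val hxy

theorem exists_mvFunction_not_isPi03 {X : Type*} [MetricSpace X] {e : (ℕ × ℕ → Bool) → X}
    (he : IsClosedEmbedding e) :
    ∃ F : X → Set ℝ, (∀ x, (F x).Nonempty) ∧ (∀ x, IsClosed (F x)) ∧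
      IsGδ {p : X × ℝ | p.2 ∈ F p.1} ∧ ¬IsPi03 {x | MVContinuousAt F x} := by
  refine ⟨extend e branches fun _ => univ,
    forall_extend_univ he.injective (fun x => ⟨_, 0, rfl⟩) univ_nonempty,
    forall_extend_univ he.injective isClosed_branches isClosed_univ,
    isGδ_graph_extend_univ he isGδ_graph_branches, ?_⟩
  rw [setOf_mvContinuousAt_extend_univ he, setOf_forall_notMem_lowerLimit_branches]
  intro h
  apply not_isPi03_compl_finiteColumns
  simpa [preimage_compl, he.injective.preimage_image] using h.preimage he.continuous

end CantorColumns

theorem exists_multivalued_function_continuity_set_not_Pi03 :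
    ∃ F : Set.Icc (0 : ℝ) 1 → Set ℝ,
      (∀ x, (F x).Nonempty) ∧ (∀ x, IsClosed (F x)) ∧
      IsGδ {p : Set.Icc (0 : ℝ) 1 × ℝ | p.2 ∈ F p.1} ∧
      ¬ IsPi03 {x : Set.Icc (0 : ℝ) 1 | MVContinuousAt F x} := by
  obtain ⟨e, he⟩ := CantorColumns.exists_isClosedEmbedding_unitInterval
  exact CantorColumns.exists_mvFunction_not_isPi03 he
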